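/- Let Ω ⊆ ℝ be open containing (0,1), let w : (0,1) → [0,∞] be measurable and not integrable on any nonempty open subinterval of (0,1) but finite a.e., and define Φ(x,t) = t·w(x) for x ∈ (0,1) (where w < ∞) and Φ(x,t) = t for x ∈ Ω \ (0,1). Then Sing Φ ⊇ [0,1] ∩ Ω̄, i.e. every point of [0,1] is a singular point of Φ. -/
import Mathlib


open MeasureTheory Metric Set Topology Filter ENNReal NNReal

noncomputable section

/-- Singular points of `Φ` on an open set `Ω ⊆ ℝ`. -/
def SingR (Ω : Set ℝ) (Φ : ℝ → ℝ → ℝ) : Set ℝ :=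
  {x | ∀ r : ℝ, 0 < r → ∃ t : ℝ, 0 < t ∧
    ∫⁻ y in Metric.ball x r ∩ Ω, ENNReal.ofReal (Φ y t) = ⊤}

theorem Icc_subset_sing (Ω : Set ℝ) (hΩ : IsOpen Ω) (hsub : Set.Ioo (0:ℝ) 1 ⊆ Ω)
    (w : ℝ → ℝ≥0∞) (hw : Measurable w)
    (hwfin : ∀ᵐ x ∂(volume.restrict (Set.Ioo (0:ℝ) 1)), w x < ⊤)
    (hwnonint : ∀ a b : ℝ, 0 ≤ a → a < b → b ≤ 1 →
      ∫⁻ x in Set.Ioo a b, w x = ⊤) :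
    Set.Icc (0:ℝ) 1 ⊆
      SingR Ω (fun x t => if x ∈ Set.Ioo (0:ℝ) 1 then t * (w x).toReal else t) := by
  intro x hx r hr
  refine ⟨1, one_pos, ?_⟩
  set a : ℝ := max 0 (x - r) with ha_def
  set b : ℝ := min 1 (x + r) with hb_def
  have ha : (0:ℝ) ≤ a := le_max_left _ _
  have hb : b ≤ 1 := min_le_left _ _
  have hab : a < b := by
    apply max_lt
    · exact lt_min one_pos (by linarith [hx.1])
    · exact lt_min (by linarith [hx.2]) (by linarith)
  have hsub01 : Set.Ioo a b ⊆ Set.Ioo (0:ℝ) 1 := fun y hy =>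
    ⟨lt_of_le_of_lt ha hy.1, lt_of_lt_of_le hy.2 hb⟩
  have hsubball : Set.Ioo a b ⊆ Metric.ball x r ∩ Ω := by
    intro y hy
    refine ⟨?_, hsub (hsub01 hy)⟩
    rw [Real.ball_eq_Ioo]
    exact ⟨lt_of_le_of_lt (le_max_right 0 (x - r)) hy.1,
      lt_of_lt_of_le hy.2 (min_le_right 1 (x + r))⟩
  have key : ∫⁻ y in Set.Ioo a b,
      ENNReal.ofReal (if y ∈ Set.Ioo (0:ℝ) 1 then 1 * (w y).toReal else 1) = ⊤ := by
    have hae : ∀ᵐ y ∂(volume.restrict (Set.Ioo a b)), w y < ⊤ :=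
      ae_mono (Measure.restrict_mono hsub01 le_rfl) hwfin
    have hmem : ∀ᵐ y ∂(volume.restrict (Set.Ioo a b)), y ∈ Set.Ioo a b :=
      ae_restrict_mem measurableSet_Ioo
    have : ∫⁻ y in Set.Ioo a b,
        ENNReal.ofReal (if y ∈ Set.Ioo (0:ℝ) 1 then 1 * (w y).toReal else 1)
        = ∫⁻ y in Set.Ioo a b, w y := by
      refine lintegral_congr_ae ?_
      filter_upwards [hae, hmem] with y hy hymem
      rw [if_pos (hsub01 hymem), one_mul, ENNReal.ofReal_toReal hy.ne]
    rw [this]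
    exact hwnonint a b ha hab hb
  refine top_le_iff.mp ?_
  calc (⊤ : ℝ≥0∞) = _ := key.symm
    _ ≤ _ := lintegral_mono_set hsubball
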